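/- Let M be an imprimitivity Hilbert C*-bimodule over commutative unital C*-algebras A and B. Then the canonical homomorphism φ_M: A → B, defined by φ_M(a) = Σⱼ⟨wⱼ, a·zⱼ⟩_B for any finite families with Σⱼ⟨wⱼ,zⱼ⟩_B = 1_B, is an isomorphism of C*-algebras, with inverse ψ_M: B → A defined by ψ_M(b) = Σᵢ⟨tᵢ·b, uᵢ⟩_A for any finite families with Σᵢ⟨tᵢ,uᵢ⟩_A = 1_A. -/

import Mathlib

/-- A pre-Hilbert C*-bimodule `M` over unital C*-algebras `A` (on the left) and
`B` (on the right): a left pre-Hilbert C*-module over `A` (inner product `innerL`,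
`A`-linear in the first variable) and a right pre-Hilbert C*-module over `B`
(inner product `innerR`, `B`-linear in the second variable), with compatible
actions. -/
structure PreHilbertBimodule (A B M : Type*) [CStarAlgebra A] [CStarAlgebra B]
    [AddCommGroup M] [Module ℂ M] where
  lsmul : A → M → M
  rsmul : M → B → M
  innerL : M → M → A
  innerR : M → M → B
  lsmul_dist : ∀ a x y, lsmul a (x + y) = lsmul a x + lsmul a y
  add_lsmul : ∀ a b x, lsmul (a + b) x = lsmul a x + lsmul b x
  mul_lsmul : ∀ a b x, lsmul (a * b) x = lsmul a (lsmul b x)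
  one_lsmul : ∀ x, lsmul 1 x = x
  lsmul_csmul : ∀ (c : ℂ) a x, lsmul a (c • x) = c • lsmul a x
  csmul_lsmul : ∀ (c : ℂ) a x, lsmul (c • a) x = c • lsmul a x
  rsmul_dist : ∀ x y b, rsmul (x + y) b = rsmul x b + rsmul y b
  rsmul_add : ∀ x a b, rsmul x (a + b) = rsmul x a + rsmul x b
  rsmul_mul : ∀ x a b, rsmul (rsmul x a) b = rsmul x (a * b)
  rsmul_one : ∀ x, rsmul x 1 = x
  rsmul_csmul : ∀ (c : ℂ) x b, rsmul (c • x) b = c • rsmul x b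
  rsmul_calg : ∀ (c : ℂ) x b, rsmul x (c • b) = c • rsmul x b
  lsmul_rsmul : ∀ a x b, lsmul a (rsmul x b) = rsmul (lsmul a x) b
  innerR_add_right : ∀ x y z, innerR x (y + z) = innerR x y + innerR x z
  innerR_rsmul_right : ∀ x y b, innerR x (rsmul y b) = innerR x y * b
  innerR_conj_symm : ∀ x y, innerR y x = star (innerR x y)
  innerR_csmul_right : ∀ (c : ℂ) x y, innerR x (c • y) = c • innerR x y
  innerR_self_pos : ∀ x, ∃ b, innerR x x = star b * b
  innerR_self_definite : ∀ x, innerR x x = 0 → x = 0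
  innerL_add_left : ∀ x y z, innerL (x + y) z = innerL x z + innerL y z
  innerL_lsmul_left : ∀ a x y, innerL (lsmul a x) y = a * innerL x y
  innerL_conj_symm : ∀ x y, innerL y x = star (innerL x y)
  innerL_csmul_left : ∀ (c : ℂ) x y, innerL (c • x) y = c • innerL x y
  innerL_self_pos : ∀ x, ∃ a, innerL x x = star a * a
  innerL_self_definite : ∀ x, innerL x x = 0 → x = 0
  innerR_lsmul : ∀ a x y, innerR x (lsmul a y) = innerR (lsmul (star a) x) y
  innerL_rsmul : ∀ x y b, innerL (rsmul x b) y = innerL x (rsmul y (star b))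

/-- An imprimitivity (equivalence) Hilbert C*-bimodule over `A` and `B`: a
pre-Hilbert C*-bimodule that is full as a left and as a right Hilbert C*-module,
satisfies the imprimitivity condition `⟨x,y⟩_A·z = x·⟨y,z⟩_B`, and is complete
(for the common norm induced by the inner products). -/
structure ImprimitivityBimodule (A B M : Type*) [CStarAlgebra A] [CStarAlgebra B]
    [AddCommGroup M] [Module ℂ M] extends PreHilbertBimodule A B M where
  imprimitivity : ∀ x y z, lsmul (innerL x y) z = rsmul x (innerR y z)
  fullL : closure (Submodule.span ℂ {a : A | ∃ x y : M, a = innerL x y} : Set A)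
      = Set.univ
  fullR : closure (Submodule.span ℂ {b : B | ∃ x y : M, b = innerR x y} : Set B)
      = Set.univ
  complete : ∀ f : ℕ → M,
    (∀ ε > 0, ∃ N, ∀ m ≥ N, ∀ n ≥ N,
      ‖innerR (f m - f n) (f m - f n)‖ < ε) →
    ∃ x, ∀ ε > 0, ∃ N, ∀ n ≥ N, ‖innerR (f n - x) (f n - x)‖ < ε

/-!
Commutativity of `A` and the imprimitivity condition make the two actions on `M` commute with the
canonical maps: `x · φ(a) = a · x` and, dually, `ψ(b) · x = x · b` for every `x : M`. Pairing the
first identity with the family `(t, u)` and the second with `(w, z)` gives `ψ ∘ φ = id` and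
`φ ∘ ψ = id`.
-/

namespace PreHilbertBimodule

variable {A B M : Type*} [CStarAlgebra A] [CStarAlgebra B] [AddCommGroup M] [Module ℂ M]
  (H : PreHilbertBimodule A B M) {ι : Type*}

lemma lsmul_sum (a : A) (s : Finset ι) (f : ι → M) :
    H.lsmul a (∑ i ∈ s, f i) = ∑ i ∈ s, H.lsmul a (f i) :=
  map_sum (AddMonoidHom.mk' (H.lsmul a) (H.lsmul_dist a)) f s

lemma sum_lsmul (s : Finset ι) (f : ι → A) (x : M) :
    H.lsmul (∑ i ∈ s, f i) x = ∑ i ∈ s, H.lsmul (f i) x :=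
  map_sum (AddMonoidHom.mk' (H.lsmul · x) (H.add_lsmul · · x)) f s

lemma rsmul_sum (x : M) (s : Finset ι) (f : ι → B) :
    H.rsmul x (∑ i ∈ s, f i) = ∑ i ∈ s, H.rsmul x (f i) :=
  map_sum (AddMonoidHom.mk' (H.rsmul x) (H.rsmul_add x)) f s

lemma sum_rsmul (s : Finset ι) (f : ι → M) (b : B) :
    H.rsmul (∑ i ∈ s, f i) b = ∑ i ∈ s, H.rsmul (f i) b :=
  map_sum (AddMonoidHom.mk' (H.rsmul · b) (H.rsmul_dist · · b)) f s

variable [Fintype ι]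

def canonicalMap (w z : ι → M) (a : A) : B :=
  ∑ j, H.innerR (w j) (H.lsmul a (z j))

def canonicalInvMap (t u : ι → M) (b : B) : A :=
  ∑ i, H.innerL (H.rsmul (t i) b) (u i)

end PreHilbertBimodule

namespace ImprimitivityBimodule

open PreHilbertBimodule

variable {A B M : Type*} [AddCommGroup M] [Module ℂ M] {ι κ : Type*} [Fintype ι] [Fintype κ]

section CommLeft

variable [CommCStarAlgebra A] [CStarAlgebra B] (H : ImprimitivityBimodule A B M)

lemma rsmul_innerR_lsmul (x w z : M) (a : A) :
    H.rsmul x (H.innerR w (H.lsmul a z)) = H.lsmul a (H.rsmul x (H.innerR w z)) := by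
  rw [← H.imprimitivity, ← H.imprimitivity, ← H.mul_lsmul, ← H.mul_lsmul, mul_comm a]

lemma rsmul_canonicalMap {w z : ι → M} (hwz : ∑ j, H.innerR (w j) (z j) = 1) (x : M) (a : A) :
    H.rsmul x (H.canonicalMap w z a) = H.lsmul a x :=
  calc H.rsmul x (H.canonicalMap w z a)
      = ∑ j, H.lsmul a (H.rsmul x (H.innerR (w j) (z j))) := by
        rw [canonicalMap, H.rsmul_sum]
        exact Finset.sum_congr rfl fun j _ => H.rsmul_innerR_lsmul x (w j) (z j) a
    _ = H.lsmul a x := by rw [← H.lsmul_sum, ← H.rsmul_sum, hwz, H.rsmul_one]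

lemma canonicalInvMap_canonicalMap {w z : ι → M} {t u : κ → M}
    (hwz : ∑ j, H.innerR (w j) (z j) = 1) (htu : ∑ i, H.innerL (t i) (u i) = 1) (a : A) :
    H.canonicalInvMap t u (H.canonicalMap w z a) = a := by
  simp only [canonicalInvMap, H.rsmul_canonicalMap hwz, H.innerL_lsmul_left]
  rw [← Finset.mul_sum, htu, mul_one]

end CommLeft

section CommRight

variable [CStarAlgebra A] [CommCStarAlgebra B] (H : ImprimitivityBimodule A B M)

lemma lsmul_innerL_rsmul (t u z : M) (b : B) :
    H.lsmul (H.innerL (H.rsmul t b) u) z = H.rsmul (H.lsmul (H.innerL t u) z) b := by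
  rw [H.imprimitivity, H.imprimitivity, H.rsmul_mul, H.rsmul_mul, mul_comm b]

lemma canonicalInvMap_lsmul {t u : ι → M} (htu : ∑ i, H.innerL (t i) (u i) = 1) (b : B)
    (x : M) : H.lsmul (H.canonicalInvMap t u b) x = H.rsmul x b :=
  calc H.lsmul (H.canonicalInvMap t u b) x
      = ∑ i, H.rsmul (H.lsmul (H.innerL (t i) (u i)) x) b := by
        rw [canonicalInvMap, H.sum_lsmul]
        exact Finset.sum_congr rfl fun i _ => H.lsmul_innerL_rsmul (t i) (u i) x b
    _ = H.rsmul x b := by rw [← H.sum_rsmul, ← H.sum_lsmul, htu, H.one_lsmul]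

lemma canonicalMap_canonicalInvMap {w z : ι → M} {t u : κ → M}
    (hwz : ∑ j, H.innerR (w j) (z j) = 1) (htu : ∑ i, H.innerL (t i) (u i) = 1) (b : B) :
    H.canonicalMap w z (H.canonicalInvMap t u b) = b := by
  simp only [canonicalMap, H.canonicalInvMap_lsmul htu, H.innerR_rsmul_right]
  rw [← Finset.sum_mul, hwz, one_mul]

end CommRight

end ImprimitivityBimodule

/-- For an imprimitivity Hilbert C*-bimodule `M` over commutative unital C*-algebras
`A` and `B`, the canonical homomorphism `φ_M(a) = Σⱼ⟨wⱼ, a·zⱼ⟩_B` (for any finite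
family with `Σⱼ⟨wⱼ,zⱼ⟩_B = 1_B`) is an isomorphism of C*-algebras, with inverse
`ψ_M(b) = Σᵢ⟨tᵢ·b, uᵢ⟩_A` (for any finite family with `Σᵢ⟨tᵢ,uᵢ⟩_A = 1_A`). -/
theorem canonical_map_isomorphism
    {A B M : Type*} [CommCStarAlgebra A] [CommCStarAlgebra B]
    [AddCommGroup M] [Module ℂ M]
    (H : ImprimitivityBimodule A B M)
    {n m : ℕ} (w z : Fin n → M) (t u : Fin m → M)
    (hwz : (∑ j, H.innerR (w j) (z j)) = 1)
    (htu : (∑ i, H.innerL (t i) (u i)) = 1)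
    (φ : A → B) (hφ : ∀ a, φ a = ∑ j, H.innerR (w j) (H.lsmul a (z j)))
    (ψ : B → A) (hψ : ∀ b, ψ b = ∑ i, H.innerL (H.rsmul (t i) b) (u i)) :
    (∀ a : A, ψ (φ a) = a) ∧ (∀ b : B, φ (ψ b) = b) := by
  obtain rfl : φ = H.canonicalMap w z := funext hφ
  obtain rfl : ψ = H.canonicalInvMap t u := funext hψ
  exact ⟨H.canonicalInvMap_canonicalMap hwz htu, H.canonicalMap_canonicalInvMap hwz htu⟩
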